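/- For every finite poset X with n elements, the Lie subalgebra 𝓛(X) of the Lie algebra of Tot_X × Tot_X matrices over ℚ (with the commutator bracket) generated by the set of matrices {B_{X,ε} : ε ∈ {0,1}^{{1,…,n−1}}} is solvable. -/

import Mathlib

/-- A linear extension of a partially ordered set `X` with `n` elements:
an order-preserving bijection `X ≃ Fin n`. -/
def LinExt (X : Type*) [PartialOrder X] (n : ℕ) : Type _ :=
  {P : X ≃ Fin n // ∀ a b : X, a ≤ b → P a ≤ P b}

/-- `eps P Q k = true` iff `Q⁻¹(k+2)` (1-based) is a `(P,Q)`-disagreement node, i.e.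
`ε_{PQ}(k+1) = 1` in 1-based indexing. -/
def eps {X : Type*} [PartialOrder X] {n : ℕ} (P Q : LinExt X n) (k : Fin (n - 1)) : Bool :=
  decide (P.1 (Q.1.symm ⟨k.1 + 1, by have := k.2; omega⟩) <
          P.1 (Q.1.symm ⟨k.1, by have := k.2; omega⟩))

/-- The 0-1 matrix `B_{X,ε}` over `ℚ`, with `(B_{X,ε})_{PQ} = 1` iff `ε_{PQ} = ε`. -/
noncomputable def Bmat (X : Type*) [PartialOrder X] (n : ℕ) (ε : Fin (n - 1) → Bool) :
    Matrix (LinExt X n) (LinExt X n) ℚ :=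
  fun P Q => if eps P Q = ε then 1 else 0

attribute [local instance 100] LieRing.ofAssociativeRing

/-!
A monotone labelling `F : X → Fin n` (an ordered set partition of `X` compatible with `≤`) acts
on linear extensions by sorting: `F · C` orders `X` by the blocks of `F`, ties broken by `C`. Its
matrices `T_F` multiply by lexicographic refinement, `T_G * T_F = T_{F·G}`, so they span an
algebra `A`. Summing `T_F` over the `F` whose cuts lie in `ε` gives `∑ δ, c(ε, δ) • B_δ`, where
`c(ε, δ)` counts monotone `φ : Fin n → Fin n` with `δ ≤ ascents φ ≤ ε`; this system is triangular
with nonzero diagonal, so every `B_ε` lies in `A`.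

Commutators `[T_F, T_G] = T_{G·F} - T_{F·G}` are differences of sorting matrices of labellings
with the same block relation (kernel). The product of two such differences `T_F - T_G` and
`T_H - T_K` vanishes when the blocks of `H` refine those of `F`, and otherwise is a combination of
such differences with strictly smaller kernel `ker H ∩ ker F`. Hence the `j`-th derived algebra
lies in the span of differences with kernels of size at most `n² - j`, which is zero for `j = n²`.
-/

open Finset

section LieChain

variable {R L : Type*} [CommRing R] [LieRing L] [LieAlgebra R L]

theorem Submodule.lie_mem_of_mem_span {s t : Set L} {P : Submodule R L}
    (h : ∀ a ∈ s, ∀ b ∈ t, ⁅a, b⁆ ∈ P) {x y : L} (hx : x ∈ Submodule.span R s)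
    (hy : y ∈ Submodule.span R t) : ⁅x, y⁆ ∈ P := by
  have hxy := Submodule.apply_mem_map₂ (LieAlgebra.ad R L).toLinearMap hx hy
  rw [Submodule.map₂_span_span] at hxy
  exact Submodule.span_le.2 (Set.image2_subset_iff.2 h) hxy

theorem LieSubalgebra.isSolvable_of_lie_mem_chain (K : LieSubalgebra R L)
    (N : ℕ → Submodule R L) (k : ℕ) (hK : ∀ x ∈ K, ∀ y ∈ K, ⁅x, y⁆ ∈ N 0)
    (hN : ∀ j, ∀ x ∈ N j, ∀ y ∈ N j, ⁅x, y⁆ ∈ N (j + 1)) (hk : N k = ⊥) :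
    LieAlgebra.IsSolvable K := by
  have lie_ideal_mem (I : LieIdeal R K) (P : Submodule R L)
      (h : ∀ a ∈ I, ∀ b ∈ I, ⁅(a : L), (b : L)⁆ ∈ P) : ∀ x ∈ ⁅I, I⁆, (x : L) ∈ P := by
    intro x hx
    rw [← LieSubmodule.mem_toSubmodule, LieSubmodule.lieIdeal_oper_eq_linear_span'] at hx
    refine (Submodule.span_le (p := P.comap K.incl.toLinearMap)).2 ?_ hx
    rintro _ ⟨a, ha, b, hb, rfl⟩
    exact h a ha b hb
  have derived_mem (j : ℕ) : ∀ x ∈ LieAlgebra.derivedSeries R K (j + 1), (x : L) ∈ N j := by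
    rw [LieAlgebra.derivedSeries_def, LieAlgebra.derivedSeriesOfIdeal_succ]
    induction j with
    | zero => exact lie_ideal_mem _ _ fun a _ b _ => hK a a.2 b b.2
    | succ j ih =>
      rw [LieAlgebra.derivedSeriesOfIdeal_succ]
      exact lie_ideal_mem _ _ fun a ha b hb => hN j a (ih a ha) b (ih b hb)
  refine (LieAlgebra.isSolvable_iff R K).2 ⟨k + 1, (LieSubmodule.eq_bot_iff _).2 fun x hx => ?_⟩
  simpa [hk] using derived_mem k x hx

end LieChain

theorem Submodule.mul_mem_of_mem_span {R A : Type*} [CommSemiring R] [Semiring A] [Algebra R A]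
    {s t : Set A} {P : Submodule R A} (h : ∀ a ∈ s, ∀ b ∈ t, a * b ∈ P) {x y : A}
    (hx : x ∈ Submodule.span R s) (hy : y ∈ Submodule.span R t) : x * y ∈ P := by
  have hxy := Submodule.mul_mem_mul hx hy
  rw [Submodule.span_mul_span] at hxy
  exact Submodule.span_le.2 (Set.mul_subset_iff.2 h) hxy

theorem mem_span_range_of_triangular {ι K M : Type*} [Fintype ι] [PartialOrder ι] [Field K]
    [AddCommGroup M] [Module K M] {v w : ι → M} (c : ι → ι → K)
    (hw : ∀ i, w i = ∑ j, c i j • v j) (hlow : ∀ i j, c i j ≠ 0 → j ≤ i)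
    (hdiag : ∀ i, c i i ≠ 0) (i : ι) : v i ∈ Submodule.span K (Set.range w) := by
  classical
  induction i using WellFoundedLT.induction with
  | _ i ih =>
  have hlower : ∑ j ∈ univ.erase i, c i j • v j ∈ Submodule.span K (Set.range w) := by
    refine Submodule.sum_mem _ fun j hj => ?_
    by_cases hc : c i j = 0
    · simp [hc]
    · exact Submodule.smul_mem _ _ (ih j ((hlow i j hc).lt_of_ne (ne_of_mem_erase hj)))
  have hvi : v i = (c i i)⁻¹ • (w i - ∑ j ∈ univ.erase i, c i j • v j) := by
    rw [hw, ← add_sum_erase _ _ (mem_univ i), add_sub_cancel_right, inv_smul_smul₀ (hdiag i)]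
  rw [hvi]
  exact Submodule.smul_mem _ _ (Submodule.sub_mem _ (Submodule.subset_span ⟨i, rfl⟩) hlower)

section KeyRank

variable {X κ κ' : Type*} [Fintype X] [LinearOrder κ] [LinearOrder κ'] {key : X → κ} {x y : X}

def keyRank (key : X → κ) (x : X) : ℕ := #{y | key y < key x}

theorem keyRank_lt_card (key : X → κ) (x : X) : keyRank key x < Fintype.card X :=
  card_lt_univ_of_notMem (x := x) (by simp)

theorem keyRank_le_keyRank (h : key x ≤ key y) : keyRank key x ≤ keyRank key y :=
  card_le_card fun z => by simpa using fun hz => hz.trans_le h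

theorem keyRank_lt_keyRank (h : key x < key y) : keyRank key x < keyRank key y :=
  card_lt_card <| (ssubset_iff_of_subset fun z => by simpa using fun hz => hz.trans h).2
    ⟨x, by simpa using h, by simp⟩

theorem keyRank_lt_keyRank_iff : keyRank key x < keyRank key y ↔ key x < key y :=
  ⟨fun h => lt_of_not_ge fun h' => (keyRank_le_keyRank h').not_gt h, keyRank_lt_keyRank⟩

theorem keyRank_le_keyRank_iff : keyRank key x ≤ keyRank key y ↔ key x ≤ key y := by
  simp only [← not_lt, keyRank_lt_keyRank_iff]

theorem keyRank_inj : keyRank key x = keyRank key y ↔ key x = key y := by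
  simp only [le_antisymm_iff, keyRank_le_keyRank_iff]

theorem keyRank_congr {key' : X → κ'} (h : ∀ x y, key x < key y ↔ key' x < key' y) :
    keyRank key = keyRank key' :=
  funext fun x => by simp only [keyRank, h]

theorem keyRank_equivFin {n : ℕ} (D : X ≃ Fin n) : keyRank D = fun x => (D x : ℕ) :=
  funext fun x => by rw [keyRank, card_equiv D (t := Iio (D x)) (by simp), Fin.card_Iio]

variable {n : ℕ} (hn : Fintype.card X = n)

def rankFin (key : X → κ) (x : X) : Fin n := ⟨keyRank key x, hn ▸ keyRank_lt_card key x⟩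

theorem rankFin_lt_iff : rankFin hn key x < rankFin hn key y ↔ key x < key y :=
  keyRank_lt_keyRank_iff

theorem rankFin_le_iff : rankFin hn key x ≤ rankFin hn key y ↔ key x ≤ key y :=
  keyRank_le_keyRank_iff

theorem rankFin_inj : rankFin hn key x = rankFin hn key y ↔ key x = key y :=
  Fin.mk.inj_iff.trans keyRank_inj

end KeyRank

section Adjacent

variable {n : ℕ}

def adjLeft (k : Fin (n - 1)) : Fin n := ⟨k, by omega⟩

def adjRight (k : Fin (n - 1)) : Fin n := ⟨k + 1, by omega⟩

theorem adjLeft_lt_adjRight (k : Fin (n - 1)) : adjLeft k < adjRight k :=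
  Fin.mk_lt_mk.2 k.1.lt_succ_self

theorem Fin.strictMono_iff_adjacent {α : Type*} [Preorder α] {g : Fin n → α} :
    StrictMono g ↔ ∀ k : Fin (n - 1), g (adjLeft k) < g (adjRight k) := by
  cases n with
  | zero => exact iff_of_true (Subsingleton.strictMono g) fun k => k.elim0
  | succ m => exact Fin.strictMono_iff_lt_succ

theorem Fin.monotone_iff_adjacent {α : Type*} [Preorder α] {g : Fin n → α} :
    Monotone g ↔ ∀ k : Fin (n - 1), g (adjLeft k) ≤ g (adjRight k) := by
  cases n with
  | zero => exact iff_of_true (Subsingleton.monotone g) fun k => k.elim0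
  | succ m => exact Fin.monotone_iff_le_succ

def ascents {α : Type*} [LinearOrder α] (g : Fin n → α) : Fin (n - 1) → Bool :=
  fun k => decide (g (adjLeft k) < g (adjRight k))

/-- Unlike `ascents`, this needs no order on the domain, so it can select labellings of `X`
without reference to a linear extension. -/
def cuts {Y : Type*} [Fintype Y] (f : Y → Fin n) : Fin (n - 1) → Bool :=
  fun k => decide (∃ v, #{y | f y ≤ v} = k + 1)

theorem cuts_comp_equiv {Y Z : Type*} [Fintype Y] [Fintype Z] (e : Y ≃ Z) (f : Z → Fin n) :
    cuts (f ∘ e) = cuts f := by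
  have hcard (v : Fin n) : #{y | f (e y) ≤ v} = #{z | f z ≤ v} := card_equiv e (by simp)
  funext k
  simp only [cuts, Function.comp_apply, hcard]

theorem card_sublevel_eq_iff {φ : Fin n → Fin n} (hφ : Monotone φ) (k : Fin (n - 1)) (v : Fin n) :
    #{p | φ p ≤ v} = k + 1 ↔ φ (adjLeft k) ≤ v ∧ v < φ (adjRight k) := by
  constructor
  · intro hv
    refine ⟨not_lt.1 fun hlt => ?_, not_le.1 fun hle => ?_⟩
    · have hsub : ({p | φ p ≤ v} : Finset (Fin n)) ⊆ Iio (adjLeft k) := fun p => by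
        simpa using fun hp => not_le.1 fun hkp => (hlt.trans_le (hφ hkp)).not_ge hp
      have := card_le_card hsub
      simp [hv, adjLeft] at this
    · have hsub : Iic (adjRight k) ⊆ ({p | φ p ≤ v} : Finset (Fin n)) := fun p => by
        simpa using fun hp => (hφ hp).trans hle
      have := card_le_card hsub
      simp [hv, adjRight] at this
  · rintro ⟨hl, hr⟩
    have hset : ({p | φ p ≤ v} : Finset (Fin n)) = Iic (adjLeft k) := by
      ext p
      simp only [mem_filter, mem_univ, true_and, mem_Iic]
      refine ⟨fun hp => not_lt.1 fun hkp => ?_, fun hp => (hφ hp).trans hl⟩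
      have : adjRight k ≤ p := Fin.mk_le_mk.2 (by simpa [Fin.lt_def, adjLeft] using hkp)
      exact (hr.trans_le (hφ this)).not_ge hp
    simp [hset, adjLeft]

theorem cuts_eq_ascents {φ : Fin n → Fin n} (hφ : Monotone φ) : cuts φ = ascents φ :=
  funext fun k => by
    simp only [cuts, ascents, card_sublevel_eq_iff hφ, decide_eq_decide]
    exact ⟨fun ⟨_, hl, hr⟩ => hl.trans_lt hr, fun h => ⟨_, le_rfl, h⟩⟩

theorem exists_monotone_ascents_eq (ε : Fin (n - 1) → Bool) :
    ∃ φ : Fin n → Fin n, Monotone φ ∧ ascents φ = ε := by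
  let P : ℕ → Prop := fun j => ∃ h : j < n - 1, ε ⟨j, h⟩
  refine ⟨fun p => ⟨Nat.count P p, (Nat.count_le P).trans_lt p.2⟩,
    fun p q hpq => Fin.mk_le_mk.2 (Nat.count_monotone P hpq), funext fun k => ?_⟩
  cases hk : ε k <;> simp [ascents, adjLeft, adjRight, Nat.count_succ, P, hk]

end Adjacent

theorem Equiv.strictMono_comp_symm_iff {X α β : Type*} [Preorder α] [LinearOrder β]
    {f : X → α} (e : X ≃ β) : StrictMono (f ∘ e.symm) ↔ ∀ x y, f x < f y ↔ e x < e y := by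
  refine ⟨fun h x y => ?_, fun h a b hab => by simpa [h] using hab⟩
  simpa using h.lt_iff_lt (a := e x) (b := e y)


theorem Prod.Lex.toLex_lt_toLex_iff_of_ne {α β : Type*} [LinearOrder α] [LinearOrder β] {a b : α}
    {p q : β} (hpq : p ≠ q) : toLex (a, p) < toLex (b, q) ↔ a ≤ b ∧ (q < p → a < b) := by
  rw [Prod.Lex.toLex_lt_toLex]
  rcases lt_trichotomy a b with h | rfl | h
  · simp [h, h.le]
  · simp only [lt_irrefl, le_refl, true_and, false_or, imp_false, not_lt]
    exact ⟨le_of_lt, fun h => h.lt_of_ne hpq⟩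
  · simp [h.not_gt, h.not_ge, h.ne']

/-- A face is an ordered set partition of `X` compatible with `≤`, encoded by block labels. -/
def Face (X : Type*) [PartialOrder X] (n : ℕ) : Type _ := {f : X → Fin n // Monotone f}

namespace Face

variable {X : Type*} [PartialOrder X] [Fintype X] {n : ℕ}

noncomputable instance : Fintype (Face X n) := by
  unfold Face
  exact Fintype.ofFinite _

def ker (F : Face X n) : Finset (X × X) := {p | F.1 p.1 = F.1 p.2}

theorem card_ker_le (hn : Fintype.card X = n) (F : Face X n) : #F.ker ≤ n * n := by
  simpa [hn] using card_le_univ F.ker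

theorem isEmpty_of_card_ker_eq_zero {F : Face X n} (h : #F.ker = 0) : IsEmpty X :=
  ⟨fun x => by simpa [card_eq_zero.1 h] using (show (x, x) ∈ F.ker by simp [ker])⟩

variable (hn : Fintype.card X = n)

def lex (F G : Face X n) : Face X n :=
  ⟨rankFin hn fun x => toLex (F.1 x, G.1 x), fun _ _ h =>
    (rankFin_le_iff hn).2 (Prod.Lex.toLex_mono ⟨F.2 h, G.2 h⟩)⟩

variable {hn} {F G : Face X n} {x y : X}

theorem lex_lt_iff : (lex hn F G).1 x < (lex hn F G).1 y ↔
    F.1 x < F.1 y ∨ F.1 x = F.1 y ∧ G.1 x < G.1 y :=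
  (rankFin_lt_iff hn).trans Prod.Lex.toLex_lt_toLex

theorem lex_eq_iff : (lex hn F G).1 x = (lex hn F G).1 y ↔ F.1 x = F.1 y ∧ G.1 x = G.1 y :=
  (rankFin_inj hn).trans <| toLex.injective.eq_iff.trans Prod.mk_inj

open scoped Classical in
theorem ker_lex : (lex hn F G).ker = F.ker ∩ G.ker := by
  ext p
  simp [ker, lex_eq_iff]

end Face

namespace LinExt

variable {X : Type*} [PartialOrder X] {n : ℕ}

theorem monotone (C : LinExt X n) : Monotone C.1 := fun a b => C.2 a b

def sortKey (F : Face X n) (C : LinExt X n) (x : X) : Fin n ×ₗ Fin n := toLex (F.1 x, C.1 x)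

theorem sortKey_injective (F : Face X n) (C : LinExt X n) : Function.Injective (sortKey F C) :=
  fun _ _ h => C.1.injective (Prod.mk_inj.1 (toLex.injective h)).2

variable [Fintype X]

theorem eq_iff_forall_lt_iff {C D : LinExt X n} : C = D ↔ ∀ x y, C.1 x < C.1 y ↔ D.1 x < D.1 y := by
  refine ⟨fun h => h ▸ fun _ _ => Iff.rfl, fun h => Subtype.ext (Equiv.ext fun x => Fin.ext ?_)⟩
  rw [← congrFun (keyRank_equivFin C.1) x, keyRank_congr h, keyRank_equivFin]

variable (hn : Fintype.card X = n)

noncomputable def sortBy (F : Face X n) (C : LinExt X n) : LinExt X n := by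
  refine ⟨Equiv.ofBijective (rankFin hn (sortKey F C)) ?_, fun _ _ h =>
    (rankFin_le_iff hn).2 (Prod.Lex.toLex_mono ⟨F.2 h, C.monotone h⟩)⟩
  refine (Fintype.bijective_iff_injective_and_card _).2 ⟨fun x y hxy => ?_, by simp [hn]⟩
  exact sortKey_injective F C ((rankFin_inj hn).1 hxy)

variable {hn} {F G : Face X n} {C D : LinExt X n} {x y : X}

theorem sortBy_lt_iff_sortKey_lt :
    (sortBy hn F C).1 x < (sortBy hn F C).1 y ↔ sortKey F C x < sortKey F C y :=
  rankFin_lt_iff hn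

theorem sortBy_lt_iff : (sortBy hn F C).1 x < (sortBy hn F C).1 y ↔
    F.1 x < F.1 y ∨ F.1 x = F.1 y ∧ C.1 x < C.1 y :=
  sortBy_lt_iff_sortKey_lt.trans Prod.Lex.toLex_lt_toLex

theorem sortBy_lex : sortBy hn (Face.lex hn F G) C = sortBy hn F (sortBy hn G C) :=
  eq_iff_forall_lt_iff.2 fun x y => by
    simp only [sortBy_lt_iff, Face.lex_lt_iff, Face.lex_eq_iff]
    tauto

theorem sortBy_lex_of_ker_subset (h : F.ker ⊆ G.ker) (C : LinExt X n) :
    sortBy hn (Face.lex hn F G) C = sortBy hn F C :=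
  eq_iff_forall_lt_iff.2 fun x y => by
    have hG : F.1 x = F.1 y → G.1 x = G.1 y := fun hF => by
      simpa [Face.ker] using h (show (x, y) ∈ F.ker by simpa [Face.ker] using hF)
    simp only [sortBy_lt_iff, Face.lex_lt_iff, Face.lex_eq_iff]
    by_cases hF : F.1 x = F.1 y <;> simp [hF, hG]

/-- Sorting `C` by `F` yields `D` iff the sort key increases along `D`, which is checked at
adjacent positions of `D`. -/
theorem sortBy_eq_iff : sortBy hn F C = D ↔
    Monotone (F.1 ∘ D.1.symm) ∧ eps C D ≤ ascents (F.1 ∘ D.1.symm) := by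
  have hne (k : Fin (n - 1)) : C.1 (D.1.symm (adjLeft k)) ≠ C.1 (D.1.symm (adjRight k)) := by
    simpa using (adjLeft_lt_adjRight k).ne
  simp only [eq_iff_forall_lt_iff, sortBy_lt_iff_sortKey_lt, ← Equiv.strictMono_comp_symm_iff,
    Fin.strictMono_iff_adjacent, Fin.monotone_iff_adjacent, Function.comp_apply, sortKey,
    Prod.Lex.toLex_lt_toLex_iff_of_ne (hne _), forall_and, Pi.le_def, Bool.le_iff_imp, eps, ascents,
    decide_eq_true_iff]
  rfl

theorem cuts_le_and_sortBy_eq_iff (ε : Fin (n - 1) → Bool) :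
    cuts F.1 ≤ ε ∧ sortBy hn F C = D ↔
      Monotone (F.1 ∘ D.1.symm) ∧ eps C D ≤ ascents (F.1 ∘ D.1.symm) ∧
        ascents (F.1 ∘ D.1.symm) ≤ ε := by
  have hcuts : cuts F.1 = cuts (F.1 ∘ D.1.symm) := by
    rw [← cuts_comp_equiv D.1, Function.comp_assoc, D.1.symm_comp_self, Function.comp_id]
  rw [sortBy_eq_iff, hcuts]
  exact ⟨fun ⟨hc, hm, he⟩ => ⟨hm, he, cuts_eq_ascents hm ▸ hc⟩,
    fun ⟨hm, he, ha⟩ => ⟨cuts_eq_ascents hm ▸ ha, hm, he⟩⟩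

end LinExt

section SortMatrix

variable {X : Type*} [PartialOrder X] [Fintype X] {n : ℕ} (hn : Fintype.card X = n)
  [DecidableEq (LinExt X n)]

noncomputable def sortMatrix (F : Face X n) : Matrix (LinExt X n) (LinExt X n) ℚ :=
  (1 : Matrix (LinExt X n) (LinExt X n) ℚ).submatrix (LinExt.sortBy hn F) id

theorem sortMatrix_apply (F : Face X n) (C D : LinExt X n) :
    sortMatrix hn F C D = if LinExt.sortBy hn F C = D then 1 else 0 :=
  Matrix.one_apply

theorem sortMatrix_lex_of_ker_subset {F G : Face X n} (h : F.ker ⊆ G.ker) :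
    sortMatrix hn (Face.lex hn F G) = sortMatrix hn F := by
  rw [sortMatrix, sortMatrix, funext (LinExt.sortBy_lex_of_ker_subset (hn := hn) h)]

noncomputable def sortSpan : Submodule ℚ (Matrix (LinExt X n) (LinExt X n) ℚ) :=
  Submodule.span ℚ (Set.range (sortMatrix hn))

open scoped Classical in
noncomputable def ascentCount (ε δ : Fin (n - 1) → Bool) : ℕ :=
  #{φ : Fin n → Fin n | Monotone φ ∧ δ ≤ ascents φ ∧ ascents φ ≤ ε}

theorem le_of_ascentCount_ne_zero {ε δ : Fin (n - 1) → Bool} (h : ascentCount ε δ ≠ 0) :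
    δ ≤ ε := by
  obtain ⟨φ, hφ⟩ := card_ne_zero.1 h
  simp only [mem_filter] at hφ
  exact hφ.2.2.1.trans hφ.2.2.2

theorem ascentCount_self_ne_zero (ε : Fin (n - 1) → Bool) : ascentCount ε ε ≠ 0 := by
  obtain ⟨φ, hφ, hasc⟩ := exists_monotone_ascents_eq ε
  exact card_ne_zero.2 ⟨φ, by simp [hφ, hasc]⟩

open scoped Classical in
noncomputable def sortSum (ε : Fin (n - 1) → Bool) : Matrix (LinExt X n) (LinExt X n) ℚ :=
  ∑ F : Face X n with cuts F.1 ≤ ε, sortMatrix hn F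

theorem sortSum_apply (ε : Fin (n - 1) → Bool) (C D : LinExt X n) :
    sortSum hn ε C D = ascentCount ε (eps C D) := by
  classical
  simp only [sortSum, Matrix.sum_apply, sortMatrix_apply, sum_boole, filter_filter, ascentCount]
  congr 1
  refine card_bij (fun F _ => F.1 ∘ D.1.symm) (fun F hF => ?_) (fun F _ G _ h => ?_) fun φ hφ => ?_
  · simpa [LinExt.cuts_le_and_sortBy_eq_iff] using hF
  · exact Subtype.ext (D.1.symm.surjective.injective_comp_right h)
  · simp only [mem_filter, mem_univ, true_and] at hφ ⊢
    refine ⟨⟨φ ∘ D.1, hφ.1.comp D.monotone⟩, ?_, by simp [Function.comp_assoc]⟩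
    exact (LinExt.cuts_le_and_sortBy_eq_iff (F := ⟨φ ∘ D.1, _⟩) ε).2
      (by simpa [Function.comp_assoc] using hφ)

theorem sortSum_eq_sum_smul_Bmat (ε : Fin (n - 1) → Bool) :
    sortSum hn ε = ∑ δ, (ascentCount ε δ : ℚ) • Bmat X n δ := by
  ext C D
  simp [sortSum_apply, Matrix.sum_apply, Bmat, eq_comm]

theorem Bmat_mem_sortSpan (ε : Fin (n - 1) → Bool) : Bmat X n ε ∈ sortSpan hn := by
  refine Submodule.span_le.2 ?_ (mem_span_range_of_triangular _ (sortSum_eq_sum_smul_Bmat hn)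
    (fun ε δ h => le_of_ascentCount_ne_zero (Nat.cast_ne_zero.1 h))
    (fun ε => Nat.cast_ne_zero.2 (ascentCount_self_ne_zero ε)) ε)
  rintro _ ⟨ε, rfl⟩
  exact Submodule.sum_mem _ fun F _ => Submodule.subset_span ⟨F, rfl⟩

variable [Fintype (LinExt X n)]

theorem sortMatrix_mul_sortMatrix (F G : Face X n) :
    sortMatrix hn G * sortMatrix hn F = sortMatrix hn (Face.lex hn F G) := by
  ext C E
  simp only [Matrix.mul_apply, sortMatrix_apply, ite_mul, one_mul, zero_mul, sum_ite_eq, mem_univ,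
    if_true, LinExt.sortBy_lex]

noncomputable def sortLieSubalgebra : LieSubalgebra ℚ (Matrix (LinExt X n) (LinExt X n) ℚ) where
  toSubmodule := sortSpan hn
  lie_mem' {x y} hx hy := by
    have hmul {a b} (ha : a ∈ sortSpan hn) (hb : b ∈ sortSpan hn) : a * b ∈ sortSpan hn := by
      refine Submodule.mul_mem_of_mem_span ?_ ha hb
      rintro _ ⟨F, rfl⟩ _ ⟨G, rfl⟩
      exact sortMatrix_mul_sortMatrix hn G F ▸ Submodule.subset_span ⟨_, rfl⟩
    exact Ring.lie_def x y ▸ Submodule.sub_mem _ (hmul hx hy) (hmul hy hx)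

end SortMatrix

section DiffSpan

variable {X : Type*} [PartialOrder X] [Fintype X] {n : ℕ} (hn : Fintype.card X = n)
  [DecidableEq (LinExt X n)]

noncomputable def diffSpan (c : ℕ) : Submodule ℚ (Matrix (LinExt X n) (LinExt X n) ℚ) :=
  Submodule.span ℚ
    {M | ∃ F G : Face X n, F.ker = G.ker ∧ #F.ker ≤ c ∧ M = sortMatrix hn F - sortMatrix hn G}

variable {hn}

theorem sortMatrix_sub_mem_diffSpan {c : ℕ} {F G : Face X n} (hFG : F.ker = G.ker)
    (hc : #F.ker ≤ c) : sortMatrix hn F - sortMatrix hn G ∈ diffSpan hn c :=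
  Submodule.subset_span ⟨F, G, hFG, hc, rfl⟩

theorem diffSpan_zero : diffSpan hn 0 = ⊥ := by
  refine (Submodule.span_eq_bot).2 ?_
  rintro _ ⟨F, G, -, hc, rfl⟩
  have := Face.isEmpty_of_card_ker_eq_zero (Nat.le_zero.1 hc)
  rw [show F = G from Subtype.ext (funext isEmptyElim), sub_self]

theorem sortMatrix_lex_sub_mem_diffSpan {c : ℕ} {F G H : Face X n} (hFG : F.ker = G.ker)
    (hc : #F.ker ≤ c) (hH : ¬F.ker ⊆ H.ker) :
    sortMatrix hn (Face.lex hn F H) - sortMatrix hn (Face.lex hn G H) ∈ diffSpan hn (c - 1) := by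
  classical
  refine sortMatrix_sub_mem_diffSpan (by rw [Face.ker_lex, Face.ker_lex, hFG]) ?_
  have : #(Face.lex hn F H).ker < #F.ker := by
    rw [Face.ker_lex]
    exact card_lt_card <|
      inter_subset_left.ssubset_of_not_subset fun h => hH (h.trans inter_subset_right)
  omega

variable [Fintype (LinExt X n)]

/-- Either `H` refines the blocks of `F` and `G`, and the four products cancel, or both
differences of the expansion live on the kernel `ker H ∩ ker F`, strictly smaller than `ker H`. -/
theorem sortMatrix_sub_mul_mem_diffSpan {c : ℕ} {F G H K : Face X n} (hFG : F.ker = G.ker)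
    (hHK : H.ker = K.ker) (hc : #H.ker ≤ c) :
    (sortMatrix hn F - sortMatrix hn G) * (sortMatrix hn H - sortMatrix hn K) ∈
      diffSpan hn (c - 1) := by
  rw [sub_mul, mul_sub, mul_sub]
  simp only [sortMatrix_mul_sortMatrix]
  by_cases h : H.ker ⊆ F.ker
  · have hKF : K.ker ⊆ F.ker := by rwa [← hHK]
    have hHG : H.ker ⊆ G.ker := by rwa [← hFG]
    have hKG : K.ker ⊆ G.ker := by rwa [← hFG]
    rw [sortMatrix_lex_of_ker_subset hn h, sortMatrix_lex_of_ker_subset hn hKF,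
      sortMatrix_lex_of_ker_subset hn hHG, sortMatrix_lex_of_ker_subset hn hKG, sub_self]
    exact zero_mem _
  · have hG : ¬H.ker ⊆ G.ker := by rwa [← hFG]
    exact sub_mem (sortMatrix_lex_sub_mem_diffSpan hHK hc h)
      (sortMatrix_lex_sub_mem_diffSpan hHK hc hG)

theorem lie_mem_diffSpan {c : ℕ} {x y : Matrix (LinExt X n) (LinExt X n) ℚ}
    (hx : x ∈ diffSpan hn c) (hy : y ∈ diffSpan hn c) : ⁅x, y⁆ ∈ diffSpan hn (c - 1) := by
  have hmul {a b} (ha : a ∈ diffSpan hn c) (hb : b ∈ diffSpan hn c) :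
      a * b ∈ diffSpan hn (c - 1) := by
    refine Submodule.mul_mem_of_mem_span ?_ ha hb
    rintro _ ⟨F, G, hFG, -, rfl⟩ _ ⟨H, K, hHK, hc, rfl⟩
    exact sortMatrix_sub_mul_mem_diffSpan hFG hHK hc
  exact Ring.lie_def x y ▸ sub_mem (hmul hx hy) (hmul hy hx)

theorem lie_mem_diffSpan_of_mem_sortSpan {x y : Matrix (LinExt X n) (LinExt X n) ℚ}
    (hx : x ∈ sortSpan hn) (hy : y ∈ sortSpan hn) : ⁅x, y⁆ ∈ diffSpan hn (n * n) := by
  classical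
  refine Submodule.lie_mem_of_mem_span ?_ hx hy
  rintro _ ⟨F, rfl⟩ _ ⟨G, rfl⟩
  rw [Ring.lie_def, sortMatrix_mul_sortMatrix, sortMatrix_mul_sortMatrix]
  exact sortMatrix_sub_mem_diffSpan (by rw [Face.ker_lex, Face.ker_lex, inter_comm])
    (Face.card_ker_le hn _)

end DiffSpan

/-- The Lie algebra (under the commutator bracket on matrices) generated by the matrices
`B_{X,ε}`, `ε ∈ {0,1}^{{1,…,n-1}}`, is solvable. -/
theorem lie_algebra_of_Bmats_isSolvable (X : Type*) [PartialOrder X] [Fintype X] (n : ℕ)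
    (hn : Fintype.card X = n) [Fintype (LinExt X n)] [DecidableEq (LinExt X n)] :
    LieAlgebra.IsSolvable
      (LieSubalgebra.lieSpan ℚ (Matrix (LinExt X n) (LinExt X n) ℚ)
        (Set.range fun ε : Fin (n - 1) → Bool => Bmat X n ε)) := by
  have hle : LieSubalgebra.lieSpan ℚ _ (Set.range fun ε => Bmat X n ε) ≤ sortLieSubalgebra hn :=
    LieSubalgebra.lieSpan_le.2 (Set.range_subset_iff.2 (Bmat_mem_sortSpan hn))
  refine LieSubalgebra.isSolvable_of_lie_mem_chain _ (fun j => diffSpan hn (n * n - j)) (n * n)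
    (fun x hx y hy => lie_mem_diffSpan_of_mem_sortSpan (hle hx) (hle hy)) (fun j x hx y hy => ?_)
    (by simpa using diffSpan_zero)
  rw [show n * n - (j + 1) = n * n - j - 1 by omega]
  exact lie_mem_diffSpan hx hy
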